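/- arXiv:1902.05404 — 4 statements merged into one kernel-verified Lean document; each statement's English description precedes it below -/
import Mathlib

section
/- Let F and F̃ be self-adjoint Hilbert–Schmidt operators on a separable Hilbert space H, and let θ : ℝ → ℝ be Lipschitz continuous with constant L_θ ≥ 0. Then the operator functions satisfy ‖θ(F) − θ(F̃)‖_HS ≤ L_θ ‖F − F̃‖_HS. -/
/-!
Expand `(θF - θF̃) (e i)` in the eigenbasis `ẽ` of `F̃`. Since `e i` is an eigenvector of `F`
with eigenvalue `μ i`, its `j`-th coordinate is `(θ (μ i) - θ (μ̃ j)) ⟪ẽ j, e i⟫`, while the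
`j`-th coordinate of `(F - F̃) (e i)` is `(μ i - μ̃ j) ⟪ẽ j, e i⟫`. The Lipschitz bound holds
coordinatewise, hence by Parseval `‖(θF - θF̃) (e i)‖ ≤ L ‖(F - F̃) (e i)‖` for every `i`, and
summing the squares over `i` gives the Hilbert–Schmidt estimate.
-/

open scoped NNReal

namespace HilbertBasis

variable {ι 𝕜 E : Type*} [RCLike 𝕜] [NormedAddCommGroup E] [InnerProductSpace 𝕜 E]
  (b : HilbertBasis ι 𝕜 E)

theorem inner_apply_of_apply_eq_smul {T : E →L[𝕜] E} {ν : ι → 𝕜}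
    (hT : ∀ k, T (b k) = ν k • b k) (j : ι) (x : E) :
    inner 𝕜 (b j) (T x) = ν j * inner 𝕜 (b j) x := by
  classical
  have hdense : Dense (Submodule.span 𝕜 (Set.range b) : Set E) :=
    Submodule.dense_iff_topologicalClosure_eq_top.mpr b.dense_span
  suffices (innerSL 𝕜 (b j)).comp T = ν j • innerSL 𝕜 (b j) from congr($this x)
  refine ContinuousLinearMap.ext_on hdense ?_
  rintro _ ⟨k, rfl⟩
  simp only [ContinuousLinearMap.comp_apply, smul_apply,
    innerSL_apply_apply, hT, inner_smul_right, smul_eq_mul,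
    orthonormal_iff_ite.mp b.orthonormal]
  split_ifs with h <;> simp [h]

theorem hasSum_norm_inner_sq (x : E) :
    HasSum (fun i => ‖inner 𝕜 (b i) x‖ ^ 2) (‖x‖ ^ 2) := by
  have h := b.hasSum_inner_mul_inner x x
  rw [inner_self_eq_norm_sq_to_K] at h
  simp_rw [← inner_conj_symm x (b _), RCLike.conj_mul] at h
  exact_mod_cast h

theorem norm_eq_sqrt_tsum_norm_inner_sq (x : E) :
    ‖x‖ = √(∑' i, ‖inner 𝕜 (b i) x‖ ^ 2) := by
  rw [(b.hasSum_norm_inner_sq x).tsum_eq, Real.sqrt_sq (norm_nonneg x)]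

end HilbertBasis

theorem sqrt_tsum_norm_sq_le_mul {ι E F : Type*} [SeminormedAddCommGroup E]
    [SeminormedAddCommGroup F] {a : ι → E} {b : ι → F} (c : ℝ≥0)
    (hb : Summable fun i => ‖b i‖ ^ 2) (hab : ∀ i, ‖a i‖ ≤ c * ‖b i‖) :
    √(∑' i, ‖a i‖ ^ 2) ≤ c * √(∑' i, ‖b i‖ ^ 2) := by
  have hsq : ∀ i, ‖a i‖ ^ 2 ≤ (c : ℝ) ^ 2 * ‖b i‖ ^ 2 := fun i => by
    rw [← mul_pow]
    exact pow_le_pow_left₀ (norm_nonneg _) (hab i) 2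
  have ha : Summable fun i => ‖a i‖ ^ 2 :=
    (hb.mul_left _).of_nonneg_of_le (fun _ => sq_nonneg _) hsq
  calc √(∑' i, ‖a i‖ ^ 2) ≤ √((c : ℝ) ^ 2 * ∑' i, ‖b i‖ ^ 2) := by
        rw [← tsum_mul_left]
        exact Real.sqrt_le_sqrt (ha.tsum_le_tsum hsq (hb.mul_left _))
    _ = c * √(∑' i, ‖b i‖ ^ 2) := by
        rw [Real.sqrt_mul (sq_nonneg _), Real.sqrt_sq c.coe_nonneg]

theorem LipschitzWith.norm_sub_apply_le_of_eigenvector {ι H : Type*} [NormedAddCommGroup H]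
    [InnerProductSpace ℝ H] {θ : ℝ → ℝ} {L : ℝ≥0} (hθ : LipschitzWith L θ)
    (b : HilbertBasis ι ℝ H) {A B θA θB : H →L[ℝ] H} {ν : ι → ℝ}
    (hB : ∀ j, B (b j) = ν j • b j) (hθB : ∀ j, θB (b j) = θ (ν j) • b j)
    {v : H} {t : ℝ} (hA : A v = t • v) (hθA : θA v = θ t • v) :
    ‖(θA - θB) v‖ ≤ L * ‖(A - B) v‖ := by
  have coord : ∀ (f : ℝ → ℝ) (T S : H →L[ℝ] H), T v = f t • v →
      (∀ j, S (b j) = f (ν j) • b j) →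
      ∀ j, inner ℝ (b j) ((T - S) v) = (f t - f (ν j)) * inner ℝ (b j) v := by
    intro f T S hT hS j
    rw [sub_apply, inner_sub_right, hT,
      b.inner_apply_of_apply_eq_smul hS, real_inner_smul_right, sub_mul]
  rw [b.norm_eq_sqrt_tsum_norm_inner_sq, b.norm_eq_sqrt_tsum_norm_inner_sq]
  refine sqrt_tsum_norm_sq_le_mul L (b.hasSum_norm_inner_sq _).summable fun j => ?_
  rw [coord θ θA θB hθA hθB, coord id A B hA hB, norm_mul, norm_mul, ← mul_assoc]
  gcongr
  simpa [Real.dist_eq] using hθ.dist_le_mul t (ν j)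

theorem lipschitz_functional_calculus_HS_general
    {H : Type*} [NormedAddCommGroup H] [InnerProductSpace ℝ H]
    {ι : Type*} (e etil : HilbertBasis ι ℝ H)
    (F Ftil θF θFtil : H →L[ℝ] H) (μ μtil : ι → ℝ) (θ : ℝ → ℝ) (Lθ : ℝ≥0)
    (hFe : ∀ i, F (e i) = μ i • e i) (hFte : ∀ i, Ftil (etil i) = μtil i • etil i)
    (hθF : ∀ i, θF (e i) = θ (μ i) • e i) (hθFt : ∀ i, θFtil (etil i) = θ (μtil i) • etil i)
    (hθ : LipschitzWith Lθ θ)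
    (hHS : Summable fun i => ‖(F - Ftil) (e i)‖ ^ 2) :
    Real.sqrt (∑' i, ‖(θF - θFtil) (e i)‖ ^ 2) ≤
      Lθ * Real.sqrt (∑' i, ‖(F - Ftil) (e i)‖ ^ 2) :=
  sqrt_tsum_norm_sq_le_mul Lθ hHS fun i =>
    hθ.norm_sub_apply_le_of_eigenvector etil hFte hθFt (hFe i) (hθF i)

/-- Operator Lipschitz property of a scalar Lipschitz function under functional calculus,
in Hilbert–Schmidt norm.  The functional calculus `θF = θ(F)`, `θFtil = θ(F̃)` is encoded via
orthonormal eigenbases `e`, `etil` of the self-adjoint Hilbert–Schmidt operators `F`, `F̃`,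
and the Hilbert–Schmidt norm is computed as `√(∑ ‖·(e i)‖²)` over the Hilbert basis `e`. -/
theorem lipschitz_functional_calculus_HS
    {H : Type*} [NormedAddCommGroup H] [InnerProductSpace ℝ H] [CompleteSpace H]
    {ι : Type*} (e etil : HilbertBasis ι ℝ H)
    (F Ftil θF θFtil : H →L[ℝ] H) (μ μtil : ι → ℝ) (θ : ℝ → ℝ) (Lθ : ℝ≥0)
    (hF : IsSelfAdjoint F) (hFtil : IsSelfAdjoint Ftil)
    (hFe : ∀ i, F (e i) = μ i • e i) (hFte : ∀ i, Ftil (etil i) = μtil i • etil i)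
    (hθF : ∀ i, θF (e i) = θ (μ i) • e i) (hθFt : ∀ i, θFtil (etil i) = θ (μtil i) • etil i)
    (hθ : LipschitzWith Lθ θ)
    (hHS : Summable fun i => ‖(F - Ftil) (e i)‖ ^ 2)
    (hHS' : Summable fun i => ‖(θF - θFtil) (e i)‖ ^ 2) :
    Real.sqrt (∑' i, ‖(θF - θFtil) (e i)‖ ^ 2) ≤
      Lθ * Real.sqrt (∑' i, ‖(F - Ftil) (e i)‖ ^ 2) :=
  lipschitz_functional_calculus_HS_general e etil F Ftil θF θFtil μ μtil θ Lθ hFe hFte hθF hθFt hθ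
    hHS
end

section
/- Let T be a positive self-adjoint bounded operator on a Hilbert space H₁, let φ be a continuous nondecreasing index function on [0, ‖T‖] with φ(0) = 0 such that t ↦ t/φ(t) is nondecreasing, and suppose f_ρ − f̄ = φ(T)g with ‖g‖ ≤ R. Define f_λ = (T + λI)^{-1}(T f_ρ + λ f̄) for λ > 0 with λ ≤ ‖T‖. Then ‖f_λ − f_ρ‖ ≤ R φ(λ). -/
/-!
In the eigenbasis of `T` the residual `f_λ - f_ρ = -λ (T + λ)⁻¹ φ(T) g` has coordinates
`-(λ φ(μᵢ) / (μᵢ + λ)) gᵢ`, and the filter factor `λ φ(t) / (t + λ)` is at most `φ(λ)`: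
for `t ≤ λ` by monotonicity of `φ`, for `t > λ` because `t / φ(t)` is nondecreasing.
The latter argument needs `φ(λ) > 0`, which continuity provides once `φ(t) > 0`.
-/

open Set

namespace HilbertBasis

variable {ι 𝕜 E : Type*} [RCLike 𝕜] [NormedAddCommGroup E] [InnerProductSpace 𝕜 E]

theorem repr_apply_of_apply_eq_smul (e : HilbertBasis ι 𝕜 E) {A : E →L[𝕜] E} {a : ι → 𝕜}
    (hA : ∀ j, A (e j) = a j • e j) (v : E) (i : ι) :
    e.repr (A v) i = a i * e.repr v i := by
  have hdense : Dense (Submodule.span 𝕜 (range e) : Set E) :=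
    Submodule.dense_iff_topologicalClosure_eq_top.mpr e.dense_span
  have : (innerSL 𝕜 (e i)).comp A = a i • innerSL 𝕜 (e i) := by
    refine ContinuousLinearMap.ext_on hdense ?_
    rintro _ ⟨j, rfl⟩
    rcases eq_or_ne i j with rfl | hij
    · simp [hA]
    · simp [hA, e.orthonormal.inner_eq_zero hij]
  simpa [e.repr_apply_apply] using congrArg (· v) this

theorem norm_le_of_forall_norm_repr_le (e : HilbertBasis ι 𝕜 E) {x y : E}
    (h : ∀ i, ‖e.repr x i‖ ≤ ‖e.repr y i‖) : ‖x‖ ≤ ‖y‖ := by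
  simpa only [LinearIsometryEquiv.norm_map] using lp.norm_mono two_ne_zero h

end HilbertBasis

theorem pos_of_pos_of_div_monotone {φ : ℝ → ℝ} {s t : ℝ} (hc : ContinuousOn φ (Icc s t))
    (hratio : ∀ r ∈ Icc s t, r / φ r ≤ t / φ t) (hs : 0 < s) (hst : s ≤ t) (ht : 0 < φ t) :
    0 < φ s := by
  by_contra! hφs
  -- by the intermediate value theorem `φ` takes a value `c` so small that `r / c > t / φ t`
  have htpos : 0 < t := hs.trans_le hst
  set c := s * φ t / (2 * t)
  have hc_pos : 0 < c := by positivity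
  have hc_lt : c < φ t := by
    rw [div_lt_iff₀ (by positivity)]
    nlinarith
  obtain ⟨r, hr, hφr⟩ := intermediate_value_Icc hst hc ⟨hφs.trans hc_pos.le, hc_lt.le⟩
  have hcross := hratio r hr
  rw [hφr, div_le_div_iff₀ hc_pos ht] at hcross
  have htc : t * c = s * φ t / 2 := by simp only [c]; field_simp
  nlinarith [hr.1]

theorem mul_div_add_le_of_div_monotone {φ : ℝ → ℝ} {M lam t : ℝ}
    (hc : ContinuousOn φ (Icc 0 M)) (h0 : φ 0 = 0) (hmono : MonotoneOn φ (Icc 0 M))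
    (hratio : ∀ s t : ℝ, 0 < s → s ≤ t → t ≤ M → s / φ s ≤ t / φ t)
    (hlam : 0 < lam) (hlamM : lam ≤ M) (ht : t ∈ Icc 0 M) :
    lam * φ t / (t + lam) ≤ φ lam := by
  have hlamI : lam ∈ Icc 0 M := ⟨hlam.le, hlamM⟩
  have hφlam : 0 ≤ φ lam := h0 ▸ hmono ⟨le_rfl, hlam.le.trans hlamM⟩ hlamI hlam.le
  rw [div_le_iff₀ (by linarith [ht.1])]
  rcases le_or_gt t lam with htl | hlt
  · have hφt_le := hmono ht hlamI htl
    nlinarith [ht.1]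
  rcases le_or_gt (φ t) 0 with hφt | hφt
  · nlinarith [ht.1]
  have hφlam_pos : 0 < φ lam :=
    pos_of_pos_of_div_monotone (hc.mono (Icc_subset_Icc hlam.le ht.2))
      (fun r hr => hratio r t (hlam.trans_le hr.1) hr.2 ht.2) hlam hlt.le hφt
  have hcross := hratio lam t hlam hlt.le ht.2
  rw [div_le_div_iff₀ hφlam_pos hφt] at hcross
  nlinarith

theorem tikhonov_approximation_error_general
    {H : Type*} [NormedAddCommGroup H] [InnerProductSpace ℝ H] [CompleteSpace H]
    {ι : Type*} (e : HilbertBasis ι ℝ H)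
    (T Φ : H →L[ℝ] H) (μ : ι → ℝ) (φ : ℝ → ℝ) (fρ fbar flam g : H) (R lam : ℝ)
    (hTe : ∀ i, T (e i) = μ i • e i) (hμ : ∀ i, μ i ∈ Set.Icc (0 : ℝ) ‖T‖)
    (hΦ : ∀ i, Φ (e i) = φ (μ i) • e i)
    (hφc : ContinuousOn φ (Set.Icc 0 ‖T‖)) (hφ0 : φ 0 = 0)
    (hφmono : MonotoneOn φ (Set.Icc 0 ‖T‖))
    (hratio : ∀ s t : ℝ, 0 < s → s ≤ t → t ≤ ‖T‖ → s / φ s ≤ t / φ t)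
    (hsrc : fρ - fbar = Φ g) (hg : ‖g‖ ≤ R)
    (hlam : 0 < lam) (hlam' : lam ≤ ‖T‖)
    (hflam : (T + lam • ContinuousLinearMap.id ℝ H) flam = T fρ + lam • fbar) :
    ‖flam - fρ‖ ≤ R * φ lam := by
  have hφ_nonneg (t : ℝ) (ht : t ∈ Icc 0 ‖T‖) : 0 ≤ φ t :=
    hφ0 ▸ hφmono ⟨le_rfl, ht.1.trans ht.2⟩ ht ht.1
  have hφlam := hφ_nonneg lam ⟨hlam.le, hlam'⟩
  have hres : (T + lam • ContinuousLinearMap.id ℝ H) (flam - fρ) = -(lam • Φ g) := by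
    rw [map_sub, hflam, ← hsrc]
    simp only [add_apply, smul_apply, ContinuousLinearMap.id_apply]
    module
  have hcoord (i : ι) :
      e.repr (flam - fρ) i = -(lam * φ (μ i) / (μ i + lam)) * e.repr g i := by
    have hpos : 0 < μ i + lam := by linarith [(hμ i).1]
    have h := e.repr_apply_of_apply_eq_smul (A := T + lam • ContinuousLinearMap.id ℝ H)
      (a := fun j => μ j + lam) (fun j => by simp [hTe, add_smul]) (flam - fρ) i
    rw [hres, map_neg, map_smul] at h
    simp only [lp.coeFn_neg, lp.coeFn_smul, Pi.neg_apply, Pi.smul_apply, smul_eq_mul,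
      e.repr_apply_of_apply_eq_smul hΦ] at h
    field_simp
    linarith
  calc ‖flam - fρ‖ ≤ ‖φ lam • g‖ := e.norm_le_of_forall_norm_repr_le fun i => by
        have hφμ := hφ_nonneg _ (hμ i)
        have hμ0 := (hμ i).1
        rw [hcoord, map_smul, lp.coeFn_smul, Pi.smul_apply, norm_mul, norm_smul, norm_neg,
          Real.norm_of_nonneg (by positivity), Real.norm_of_nonneg hφlam]
        gcongr
        exact mul_div_add_le_of_div_monotone hφc hφ0 hφmono hratio hlam hlam' (hμ i)
    _ = φ lam * ‖g‖ := by rw [norm_smul, Real.norm_of_nonneg hφlam]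
    _ ≤ R * φ lam := by rw [mul_comm]; gcongr

/-- Approximation error bound for Tikhonov regularization under a general source condition.
`T` is a positive self-adjoint bounded operator diagonalized by the Hilbert basis `e`
with eigenvalues `μ i ∈ [0, ‖T‖]`, `Φ = φ(T)` is the functional calculus of the index
function `φ`, the source condition reads `fρ - fbar = φ(T) g` with `‖g‖ ≤ R`, and
`flam = (T + λI)⁻¹(T fρ + λ fbar)`.  Then `‖flam - fρ‖ ≤ R φ(λ)`. -/
theorem tikhonov_approximation_error
    {H : Type*} [NormedAddCommGroup H] [InnerProductSpace ℝ H] [CompleteSpace H]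
    {ι : Type*} (e : HilbertBasis ι ℝ H)
    (T Φ : H →L[ℝ] H) (μ : ι → ℝ) (φ : ℝ → ℝ) (fρ fbar flam g : H) (R lam : ℝ)
    (hT : T.IsPositive)
    (hTe : ∀ i, T (e i) = μ i • e i) (hμ : ∀ i, μ i ∈ Set.Icc (0 : ℝ) ‖T‖)
    (hΦ : ∀ i, Φ (e i) = φ (μ i) • e i)
    (hφc : ContinuousOn φ (Set.Icc 0 ‖T‖)) (hφ0 : φ 0 = 0)
    (hφmono : MonotoneOn φ (Set.Icc 0 ‖T‖))
    (hratio : ∀ s t : ℝ, 0 < s → s ≤ t → t ≤ ‖T‖ → s / φ s ≤ t / φ t)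
    (hsrc : fρ - fbar = Φ g) (hg : ‖g‖ ≤ R)
    (hlam : 0 < lam) (hlam' : lam ≤ ‖T‖)
    (hflam : (T + lam • ContinuousLinearMap.id ℝ H) flam = T fρ + lam • fbar) :
    ‖flam - fρ‖ ≤ R * φ lam :=
  tikhonov_approximation_error_general e T Φ μ φ fρ fbar flam g R lam hTe hμ hΦ hφc hφ0 hφmono
    hratio hsrc hg hlam hlam' hflam
end

section
/- Let A and B be positive self-adjoint bounded invertible operators on a Hilbert space. Then ‖A^{-1/2} B^{1/2}‖ ≤ ‖A^{-1} B‖^{1/2}. -/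
/-!
With `T = A^{-1/2} B^{1/2}` we have `‖T‖² = ‖T⋆T‖ = ‖B^{1/2} (A⁻¹ B^{1/2})‖`. For a self-adjoint
product `xy` in a C⋆-ring, `‖xy‖ ≤ ‖yx‖`: the norm of `xy` is its spectral radius, computed along
the powers `‖(xy)^{2^n}‖ = ‖xy‖^{2^n}`, and `(xy)^{k+1} = x (yx)^k y` bounds these by
`‖x‖ ‖y‖ ‖yx‖^k`. Here `yx = A⁻¹ B`.
-/

open Filter

theorem le_of_frequently_pow_succ_le_mul_pow {a b K : ℝ} (hb : 0 ≤ b)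
    (h : ∃ᶠ k in atTop, a ^ (k + 1) ≤ K * b ^ k) : a ≤ b := by
  by_contra! hba
  have ha : 0 < a := hb.trans_lt hba
  have hlim : Tendsto (fun k : ℕ => K * (b / a) ^ k) atTop (nhds 0) := by
    simpa using (tendsto_pow_atTop_nhds_zero_of_lt_one (div_nonneg hb ha.le)
      ((div_lt_one ha).mpr hba)).const_mul K
  refine h ((hlim.eventually (gt_mem_nhds ha)).mono fun k hk => ?_)
  rw [div_pow, mul_div_assoc', div_lt_iff₀ (pow_pos ha k)] at hk
  rw [not_le, pow_succ']
  linarith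

theorem norm_pow_mul_le {R : Type*} [SeminormedRing R] (c y : R) (m : ℕ) :
    ‖c ^ m * y‖ ≤ ‖c‖ ^ m * ‖y‖ := by
  induction m with
  | zero => simp
  | succ m ih =>
    calc ‖c ^ (m + 1) * y‖ = ‖c * (c ^ m * y)‖ := by rw [pow_succ', mul_assoc]
      _ ≤ ‖c‖ * (‖c‖ ^ m * ‖y‖) := (norm_mul_le _ _).trans (by gcongr)
      _ = ‖c‖ ^ (m + 1) * ‖y‖ := by ring

theorem mul_pow_succ_eq_mul_pow_mul {M : Type*} [Monoid M] (x y : M) (m : ℕ) :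
    (x * y) ^ (m + 1) = x * (y * x) ^ m * y := by
  have : SemiconjBy x (y * x) (x * y) := (mul_assoc x y x).symm
  rw [pow_succ, ← mul_assoc, ← (this.pow_right m).eq]

theorem IsSelfAdjoint.of_mul_eq_one {M : Type*} [Monoid M] [StarMul M] {a b : M}
    (ha : IsSelfAdjoint a) (h : b * a = 1) : IsSelfAdjoint b := by
  have hright : a * star b = 1 := by rw [← ha.star_eq, ← star_mul, h, star_one]
  exact (left_inv_eq_right_inv h hright).symm

theorem IsSelfAdjoint.norm_mul_le_norm_mul_comm {E : Type*} [NormedRing E] [StarRing E]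
    [CStarRing E] {x y : E} (hxy : IsSelfAdjoint (x * y)) : ‖x * y‖ ≤ ‖y * x‖ := by
  refine le_of_frequently_pow_succ_le_mul_pow (K := ‖x‖ * ‖y‖) (norm_nonneg _)
    (frequently_atTop.2 fun m => ?_)
  obtain ⟨k, hk⟩ := Nat.exists_eq_add_one_of_ne_zero (pow_ne_zero m two_ne_zero)
  refine ⟨k, by have := m.lt_two_pow_self; omega, ?_⟩
  rw [← hk, ← hxy.norm_pow_two_pow, hk, mul_pow_succ_eq_mul_pow_mul, mul_assoc]
  calc _ ≤ ‖x‖ * ‖(y * x) ^ k * y‖ := norm_mul_le _ _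
    _ ≤ ‖x‖ * (‖y * x‖ ^ k * ‖y‖) := by gcongr; exact norm_pow_mul_le _ _ _
    _ = ‖x‖ * ‖y‖ * ‖y * x‖ ^ k := by ring

theorem cordes_inequality_general
    {H : Type*} [NormedAddCommGroup H] [InnerProductSpace ℝ H] [CompleteSpace H]
    (A B sqA sqB invA invSqA : H →L[ℝ] H)
    (hsqA : sqA.comp sqA = A) (hsqApos : sqA.IsPositive)
    (hsqB : sqB.comp sqB = B) (hsqBpos : sqB.IsPositive)
    (hinvA2 : A.comp invA = ContinuousLinearMap.id ℝ H)
    (hinvSqA1 : invSqA.comp sqA = ContinuousLinearMap.id ℝ H) :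
    ‖invSqA.comp sqB‖ ≤ Real.sqrt ‖invA.comp B‖ := by
  change sqA * sqA = A at hsqA
  change sqB * sqB = B at hsqB
  change A * invA = 1 at hinvA2
  change invSqA * sqA = 1 at hinvSqA1
  change ‖invSqA * sqB‖ ≤ Real.sqrt ‖invA * B‖
  have hinvSqA_sa : IsSelfAdjoint invSqA := hsqApos.isSelfAdjoint.of_mul_eq_one hinvSqA1
  have hinvSqA_sq : invSqA * invSqA = invA := by
    refine left_inv_eq_right_inv ?_ hinvA2
    rw [← hsqA, mul_assoc, ← mul_assoc invSqA sqA, hinvSqA1, one_mul, hinvSqA1]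
  have hstar : star (invSqA * sqB) * (invSqA * sqB) = sqB * (invA * sqB) := by
    rw [star_mul, hsqBpos.isSelfAdjoint.star_eq, hinvSqA_sa.star_eq, mul_assoc,
      ← mul_assoc invSqA, hinvSqA_sq]
  have hcomm : invA * sqB * sqB = invA * B := by rw [mul_assoc, hsqB]
  rw [Real.le_sqrt (norm_nonneg _) (norm_nonneg _), sq, ← CStarRing.norm_star_mul_self, hstar,
    ← hcomm]
  exact (hstar ▸ IsSelfAdjoint.star_mul_self _).norm_mul_le_norm_mul_comm

/-- Cordes-type inequality: for positive self-adjoint bounded invertible operators `A, B`,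
`‖A^{-1/2} B^{1/2}‖ ≤ ‖A⁻¹ B‖^{1/2}`.  Square roots and inverses are encoded by
positive operators `sqA, sqB` squaring to `A, B` and two-sided inverses `invA, invSqA`. -/
theorem cordes_inequality
    {H : Type*} [NormedAddCommGroup H] [InnerProductSpace ℝ H] [CompleteSpace H]
    (A B sqA sqB invA invSqA : H →L[ℝ] H)
    (hA : A.IsPositive) (hB : B.IsPositive)
    (hsqA : sqA.comp sqA = A) (hsqApos : sqA.IsPositive)
    (hsqB : sqB.comp sqB = B) (hsqBpos : sqB.IsPositive)
    (hinvA1 : invA.comp A = ContinuousLinearMap.id ℝ H)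
    (hinvA2 : A.comp invA = ContinuousLinearMap.id ℝ H)
    (hinvSqA1 : invSqA.comp sqA = ContinuousLinearMap.id ℝ H)
    (hinvSqA2 : sqA.comp invSqA = ContinuousLinearMap.id ℝ H) :
    ‖invSqA.comp sqB‖ ≤ Real.sqrt ‖invA.comp B‖ :=
  cordes_inequality_general A B sqA sqB invA invSqA hsqA hsqApos hsqB hsqBpos hinvA2 hinvSqA1
end

section
/- Let T and T* be positive self-adjoint compact operators on a separable Hilbert space, φ a continuous increasing function with φ(0)=0, and suppose φ(T) = R φ(T*) for a bounded invertible operator R. Then for every j ∈ ℕ, φ(s_j(T)) ≤ ‖R‖ φ(s_j(T*)) and φ(s_j(T*)) ≤ ‖R^{-1}‖ φ(s_j(T)). -/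
/-!
A min-max argument. For each `j`, a dimension count gives a nonzero `x` in the span of the first
`j + 1` eigenvectors of `φ(T)` that is orthogonal to the first `j` eigenvectors of `φ(T⋆)`.
Expanding in the two Hilbert bases, `φ(s_j(T)) ‖x‖ ≤ ‖φ(T) x‖` and `‖φ(T⋆) x‖ ≤ φ(s_j(T⋆)) ‖x‖`,
while `‖φ(T) x‖ = ‖R φ(T⋆) x‖ ≤ ‖R‖ ‖φ(T⋆) x‖`. The second inequality is the same argument
for `φ(T⋆) = R⁻¹ φ(T)`.
-/

open scoped InnerProductSpace
open Module Submodule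

section

variable {𝕜 E ι : Type*} [RCLike 𝕜] [NormedAddCommGroup E] [InnerProductSpace 𝕜 E]

namespace HilbertBasis

theorem norm_le_norm_of_forall_norm_inner_le (b : HilbertBasis ι 𝕜 E) {x y : E}
    (h : ∀ i, ‖⟪b i, x⟫_𝕜‖ ≤ ‖⟪b i, y⟫_𝕜‖) : ‖x‖ ≤ ‖y‖ := by
  rw [← b.repr.norm_map x, ← b.repr.norm_map y]
  exact lp.norm_mono two_ne_zero fun i => by simpa only [b.repr_apply_apply] using h i

variable (b : HilbertBasis ι 𝕜 E) {A : E →L[𝕜] E} {α : ι → 𝕜}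

theorem inner_apply_eq_mul_of_apply_eq_smul (hA : ∀ i, A (b i) = α i • b i) (x : E) (k : ι) :
    ⟪b k, A x⟫_𝕜 = α k * ⟪b k, x⟫_𝕜 := by
  have h := (b.hasSum_repr x).mapL (innerSL 𝕜 (b k) ∘L A)
  refine (h.unique (hasSum_single k fun i hi => ?_)).trans ?_
  · simp [hA, b.orthonormal.2 hi.symm]
  · simp [hA, b.repr_apply_apply, b.orthonormal.1 k, mul_comm]

theorem norm_apply_le_of_apply_eq_smul (hA : ∀ i, A (b i) = α i • b i) {x : E} {C : ℝ}
    (hC : 0 ≤ C) (h : ∀ i, ⟪b i, x⟫_𝕜 ≠ 0 → ‖α i‖ ≤ C) : ‖A x‖ ≤ C * ‖x‖ := by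
  calc ‖A x‖ ≤ ‖(C : 𝕜) • x‖ := b.norm_le_norm_of_forall_norm_inner_le fun i => by
        rw [b.inner_apply_eq_mul_of_apply_eq_smul hA, inner_smul_right, norm_mul, norm_mul,
          RCLike.norm_ofReal, abs_of_nonneg hC]
        by_cases hi : ⟪b i, x⟫_𝕜 = 0
        · simp [hi]
        · exact mul_le_mul_of_nonneg_right (h i hi) (norm_nonneg _)
    _ = C * ‖x‖ := by rw [norm_smul, RCLike.norm_ofReal, abs_of_nonneg hC]

theorem le_norm_apply_of_apply_eq_smul (hA : ∀ i, A (b i) = α i • b i) {x : E} {c : ℝ}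
    (hc : 0 ≤ c) (h : ∀ i, ⟪b i, x⟫_𝕜 ≠ 0 → c ≤ ‖α i‖) : c * ‖x‖ ≤ ‖A x‖ := by
  calc c * ‖x‖ = ‖(c : 𝕜) • x‖ := by rw [norm_smul, RCLike.norm_ofReal, abs_of_nonneg hc]
    _ ≤ ‖A x‖ := b.norm_le_norm_of_forall_norm_inner_le fun i => by
        rw [b.inner_apply_eq_mul_of_apply_eq_smul hA, inner_smul_right, norm_mul, norm_mul,
          RCLike.norm_ofReal, abs_of_nonneg hc]
        by_cases hi : ⟪b i, x⟫_𝕜 = 0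
        · simp [hi]
        · exact mul_le_mul_of_nonneg_right (h i hi) (norm_nonneg _)

end HilbertBasis

theorem Submodule.exists_mem_orthogonal_ne_zero_of_finrank_lt (V W : Submodule 𝕜 E)
    [FiniteDimensional 𝕜 V] [FiniteDimensional 𝕜 W] (h : finrank 𝕜 W < finrank 𝕜 V) :
    ∃ x ∈ V, x ∈ Wᗮ ∧ x ≠ 0 := by
  have hker := LinearMap.ker_ne_bot_of_finrank_lt
    (f := (W.orthogonalProjectionOnto : E →ₗ[𝕜] W) ∘ₗ V.subtype) h
  obtain ⟨⟨x, hxV⟩, hx, hx0⟩ := Submodule.exists_mem_ne_zero_of_ne_bot hker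
  exact ⟨x, hxV, by simpa using hx, by simpa using hx0⟩

theorem Orthonormal.exists_ne_zero_forall_inner_eq_zero {b₁ : ℕ → E} (hb₁ : Orthonormal 𝕜 b₁)
    (b₂ : ℕ → E) (j : ℕ) :
    ∃ x : E, x ≠ 0 ∧ (∀ i, j < i → ⟪b₁ i, x⟫_𝕜 = 0) ∧ ∀ i < j, ⟪b₂ i, x⟫_𝕜 = 0 := by
  set V := span 𝕜 (Set.range (b₁ ∘ Fin.val : Fin (j + 1) → E))
  set W := span 𝕜 (Set.range (b₂ ∘ Fin.val : Fin j → E))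
  have : FiniteDimensional 𝕜 V := FiniteDimensional.span_of_finite 𝕜 (Set.finite_range _)
  have : FiniteDimensional 𝕜 W := FiniteDimensional.span_of_finite 𝕜 (Set.finite_range _)
  have hdim : finrank 𝕜 W < finrank 𝕜 V := by
    rw [finrank_span_eq_card (hb₁.linearIndependent.comp _ Fin.val_injective), Fintype.card_fin]
    exact Nat.lt_succ_of_le ((finrank_range_le_card _).trans_eq (Fintype.card_fin j))
  obtain ⟨x, hxV, hxW, hx0⟩ := V.exists_mem_orthogonal_ne_zero_of_finrank_lt W hdim
  refine ⟨x, hx0, fun i hi => ?_, fun i hi =>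
    inner_right_of_mem_orthogonal (subset_span ⟨⟨i, hi⟩, rfl⟩ : b₂ i ∈ W) hxW⟩
  have hV : V ≤ (𝕜 ∙ b₁ i)ᗮ := span_le.mpr <| by
    rintro _ ⟨k, rfl⟩
    exact mem_orthogonal_singleton_iff_inner_right.mpr (hb₁.2 (by omega))
  exact mem_orthogonal_singleton_iff_inner_right.mp (hV hxV)

theorem HilbertBasis.le_opNorm_mul_of_eq_comp (b₁ b₂ : HilbertBasis ℕ 𝕜 E)
    {A₁ A₂ R : E →L[𝕜] E} {α β : ℕ → ℝ}
    (hA₁ : ∀ i, A₁ (b₁ i) = (α i : 𝕜) • b₁ i) (hA₂ : ∀ i, A₂ (b₂ i) = (β i : 𝕜) • b₂ i)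
    (hα : Antitone α) (hβ : Antitone β) (hα₀ : ∀ i, 0 ≤ α i) (hβ₀ : ∀ i, 0 ≤ β i)
    (hR : A₁ = R ∘L A₂) (j : ℕ) : α j ≤ ‖R‖ * β j := by
  obtain ⟨x, hx0, hx₁, hx₂⟩ := b₁.orthonormal.exists_ne_zero_forall_inner_eq_zero b₂ j
  have lower : α j * ‖x‖ ≤ ‖A₁ x‖ := b₁.le_norm_apply_of_apply_eq_smul hA₁ (hα₀ j) fun i hi => by
    rw [RCLike.norm_ofReal, abs_of_nonneg (hα₀ i)]
    exact hα (not_lt.mp fun h => hi (hx₁ i h))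
  have upper : ‖A₂ x‖ ≤ β j * ‖x‖ := b₂.norm_apply_le_of_apply_eq_smul hA₂ (hβ₀ j) fun i hi => by
    rw [RCLike.norm_ofReal, abs_of_nonneg (hβ₀ i)]
    exact hβ (not_lt.mp fun h => hi (hx₂ i h))
  refine le_of_mul_le_mul_right ?_ (norm_pos_iff.mpr hx0)
  calc α j * ‖x‖ ≤ ‖A₁ x‖ := lower
    _ = ‖R (A₂ x)‖ := by rw [hR, ContinuousLinearMap.comp_apply]
    _ ≤ ‖R‖ * ‖A₂ x‖ := R.le_opNorm _
    _ ≤ ‖R‖ * β j * ‖x‖ := by rw [mul_assoc]; gcongr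

end

-- `ΦT`, `ΦTs` stand for `φ(T)`, `φ(T⋆)`, and `μ j = s_j(T)`, `ν j = s_j(T⋆)` are the eigenvalues
-- along the eigenbases `e`, `etil` of `T`, `T⋆`.
theorem singular_value_transfer_general
    {H : Type*} [NormedAddCommGroup H] [InnerProductSpace ℝ H]
    (e etil : HilbertBasis ℕ ℝ H)
    (ΦT ΦTs R Rinv : H →L[ℝ] H)
    (μ ν : ℕ → ℝ) (φ : ℝ → ℝ)
    (hμ : ∀ i, 0 ≤ μ i) (hν : ∀ i, 0 ≤ ν i)
    (hμa : Antitone μ) (hνa : Antitone ν)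
    (hΦT : ∀ i, ΦT (e i) = φ (μ i) • e i) (hΦTs : ∀ i, ΦTs (etil i) = φ (ν i) • etil i)
    (hφm : StrictMono φ) (hφ0 : φ 0 = 0)
    (hrel : ΦT = R.comp ΦTs)
    (hR2 : Rinv.comp R = ContinuousLinearMap.id ℝ H) :
    ∀ j : ℕ, φ (μ j) ≤ ‖R‖ * φ (ν j) ∧ φ (ν j) ≤ ‖Rinv‖ * φ (μ j) := by
  have hφμ : ∀ i, 0 ≤ φ (μ i) := fun i => hφ0 ▸ hφm.monotone (hμ i)
  have hφν : ∀ i, 0 ≤ φ (ν i) := fun i => hφ0 ▸ hφm.monotone (hν i)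
  have hrel' : ΦTs = Rinv ∘L ΦT := by
    rw [hrel, ← ContinuousLinearMap.comp_assoc, hR2, ContinuousLinearMap.id_comp]
  exact fun j =>
    ⟨e.le_opNorm_mul_of_eq_comp etil hΦT hΦTs (hφm.monotone.comp_antitone hμa)
      (hφm.monotone.comp_antitone hνa) hφμ hφν hrel j,
    etil.le_opNorm_mul_of_eq_comp e hΦTs hΦT (hφm.monotone.comp_antitone hνa)
      (hφm.monotone.comp_antitone hμa) hφν hφμ hrel' j⟩

/-- Transfer of singular values under the link condition `φ(T) = R φ(T⋆)`.
`T` and `T⋆` are positive compact self-adjoint operators diagonalized by Hilbert bases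
`e`, `etil` with decreasingly ordered nonnegative eigenvalues `μ`, `ν` (so that
`s_j(T) = μ j`, `s_j(T⋆) = ν j`), and the functional calculus `φ(T)`, `φ(T⋆)` is encoded
by the operators `ΦT`, `ΦTs` acting diagonally by `φ`.  If `ΦT = R ∘ ΦTs` with `R`
boundedly invertible (inverse `Rinv`), then `φ(s_j(T)) ≤ ‖R‖ φ(s_j(T⋆))` and
`φ(s_j(T⋆)) ≤ ‖R⁻¹‖ φ(s_j(T))` for every `j`. -/
theorem singular_value_transfer
    {H : Type*} [NormedAddCommGroup H] [InnerProductSpace ℝ H] [CompleteSpace H]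
    (e etil : HilbertBasis ℕ ℝ H)
    (T Ts ΦT ΦTs R Rinv : H →L[ℝ] H)
    (μ ν : ℕ → ℝ) (φ : ℝ → ℝ)
    (hT : T.IsPositive) (hTs : Ts.IsPositive)
    (hTc : IsCompactOperator T) (hTsc : IsCompactOperator Ts)
    (hTe : ∀ i, T (e i) = μ i • e i) (hTse : ∀ i, Ts (etil i) = ν i • etil i)
    (hμ : ∀ i, 0 ≤ μ i) (hν : ∀ i, 0 ≤ ν i)
    (hμa : Antitone μ) (hνa : Antitone ν)
    (hΦT : ∀ i, ΦT (e i) = φ (μ i) • e i) (hΦTs : ∀ i, ΦTs (etil i) = φ (ν i) • etil i)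
    (hφc : Continuous φ) (hφm : StrictMono φ) (hφ0 : φ 0 = 0)
    (hrel : ΦT = R.comp ΦTs)
    (hR1 : R.comp Rinv = ContinuousLinearMap.id ℝ H)
    (hR2 : Rinv.comp R = ContinuousLinearMap.id ℝ H) :
    ∀ j : ℕ, φ (μ j) ≤ ‖R‖ * φ (ν j) ∧ φ (ν j) ≤ ‖Rinv‖ * φ (μ j) :=
  singular_value_transfer_general e etil ΦT ΦTs R Rinv μ ν φ hμ hν hμa hνa hΦT hΦTs hφm hφ0 hrel hR2
end
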